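/- Let (W,S) be a Coxeter system and let t ∈ W be a reflection (i.e., a conjugate of an element of S). Let u, v ∈ W and suppose u < ut in the Bruhat order. Then uv < utv in the Bruhat order if and only if v < tv in the Bruhat order. -/

import Mathlib

/-!
The reflection representation of `W` on `W × ℤˣ`, in which `s i` sends `(t, ε)` to
`(s i * t * s i, ±ε)` with the sign flipped exactly when `t = s i`, yields a sign `η(w, t)`: the
parity of the number of occurrences of `t` in the left inversion sequence of any word for `w`.
It is a cocycle, `η(uv, t) = η(u, t) η(v, u⁻¹tu)`, and for a reflection `t` it detects left
inversions: `η(w, t) = -1` iff `ℓ(tw) < ℓ(w)` (strong exchange), while `x < tx` in the Bruhat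
order iff `ℓ(x) < ℓ(tx)`. With `t' = utu⁻¹` we have `ut = t'u` and `utv = t'uv`, and the
cocycle rule gives `η(uv, t') = η(u, t') η(v, t) = η(v, t)`.
-/

variable {B W : Type*} [Group W] {M : CoxeterMatrix B}

/-- The Bruhat order on a Coxeter group: `x ≤ w` iff some reduced word for `w` contains a
subword (sublist) that is a reduced word for `x`. -/
def bruhatLE (cs : CoxeterSystem M W) (x w : W) : Prop :=
  ∃ ω : List B, cs.IsReduced ω ∧ cs.wordProd ω = w ∧
    ∃ ω' : List B, ω'.Sublist ω ∧ cs.IsReduced ω' ∧ cs.wordProd ω' = x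

/-- The strict Bruhat order. -/
def bruhatLT (cs : CoxeterSystem M W) (x w : W) : Prop :=
  bruhatLE cs x w ∧ x ≠ w

namespace CoxeterSystem

open List

theorem prod_map_alternatingWord_two_mul {G : Type*} [Monoid G] (f : B → G) (i i' : B) (m : ℕ) :
    ((alternatingWord i i' (2 * m)).map f).prod = (f i * f i') ^ m := by
  induction m with
  | zero => simp [alternatingWord]
  | succ m ih =>
    have : alternatingWord i i' (2 * (m + 1)) = i :: i' :: alternatingWord i i' (2 * m) := by
      rw [show 2 * (m + 1) = 2 * m + 1 + 1 by ring, alternatingWord_succ', alternatingWord_succ']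
      simp
    rw [this, map_cons, map_cons, prod_cons, prod_cons, ih, pow_succ', mul_assoc]

variable (cs : CoxeterSystem M W)

local prefix:100 "s " => cs.simple
local prefix:100 "π " => cs.wordProd
local prefix:100 "ℓ " => cs.length
local prefix:100 "lis " => cs.leftInvSeq

theorem even_count_leftInvSeq_alternatingWord [DecidableEq W] (i i' : B) (t : W) :
    Even ((lis (alternatingWord i i' (2 * M i i'))).count t) := by
  set f : ℕ → W := fun k => s i * (s i' * s i) ^ k
  have hf : f ∘ (M i i' + ·) = f := by
    funext k
    simp [f, pow_add]
  have hlis : lis (alternatingWord i i' (2 * M i i')) = (range (2 * M i i')).map f := by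
    refine ext_getElem (by simp) fun k hk _ => ?_
    rw [getElem_leftInvSeq_alternatingWord cs i i' _ k (by simpa using hk),
      prod_alternatingWord_eq_mul_pow]
    simp [f, Nat.add_div_of_dvd_right]
  rw [hlis, two_mul, range_add, map_append, map_map, hf, count_append]
  exact ⟨_, rfl⟩

open scoped Classical in
noncomputable def reflectionPerm (i : B) : Equiv.Perm (W × ℤˣ) :=
  Function.Involutive.toPerm (fun p => (MulAut.conj (s i) p.1, if p.1 = s i then -p.2 else p.2))
    (by rintro ⟨t, ε⟩; by_cases ht : t = s i <;> simp [ht, mul_assoc, mul_eq_one_iff_eq_inv])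

open scoped Classical in
theorem prod_map_reflectionPerm_apply (ω : List B) (t : W) (ε : ℤˣ) :
    (ω.map cs.reflectionPerm).prod (t, ε) =
      (MulAut.conj (π ω) t, (-1) ^ (lis ω).count (MulAut.conj (π ω) t) * ε) := by
  induction ω generalizing t ε with
  | nil => simp
  | cons i ω ih =>
    have hcount (x : W) : (lis (i :: ω)).count (MulAut.conj (s i) x) =
        (lis ω).count x + if x = s i then 1 else 0 := by
      rw [leftInvSeq, count_cons, count_map_of_injective _ _ (MulAut.conj (s i)).injective]
      simp only [beq_iff_eq, eq_comm (a := s i),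
        (MulAut.conj (s i)).injective.eq_iff' (by simp : MulAut.conj (s i) (s i) = s i)]
    simp only [map_cons, prod_cons, Equiv.Perm.mul_apply, ih, wordProd_cons, map_mul,
      MulAut.mul_apply, hcount]
    simp [reflectionPerm, pow_add, apply_ite, mul_assoc]

theorem isLiftable_reflectionPerm : M.IsLiftable cs.reflectionPerm := by
  classical
  intro i i'
  ext ⟨t, ε⟩ : 1
  have hπ : π (alternatingWord i i' (2 * M i i')) = 1 := by
    simp [prod_alternatingWord_eq_mul_pow]
  obtain ⟨c, hc⟩ := cs.even_count_leftInvSeq_alternatingWord i i' t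
  rw [← prod_map_alternatingWord_two_mul, prod_map_reflectionPerm_apply, hπ]
  simp [hc, ← two_mul, pow_mul]

noncomputable def reflectionRep : W →* Equiv.Perm (W × ℤˣ) :=
  cs.lift ⟨cs.reflectionPerm, cs.isLiftable_reflectionPerm⟩

theorem reflectionRep_wordProd (ω : List B) :
    cs.reflectionRep (π ω) = (ω.map cs.reflectionPerm).prod := by
  rw [wordProd, map_list_prod, map_map]
  congr 2
  funext i
  exact cs.lift_apply_simple _ i

noncomputable def inversionSign (w t : W) : ℤˣ :=
  (cs.reflectionRep w (MulAut.conj w⁻¹ t, 1)).2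

open scoped Classical in
theorem inversionSign_wordProd (ω : List B) (t : W) :
    cs.inversionSign (π ω) t = (-1) ^ (lis ω).count t := by
  simp [inversionSign, reflectionRep_wordProd, prod_map_reflectionPerm_apply, mul_assoc]

theorem reflectionRep_apply (w t : W) (ε : ℤˣ) :
    cs.reflectionRep w (t, ε) = (MulAut.conj w t, cs.inversionSign w (MulAut.conj w t) * ε) := by
  classical
  obtain ⟨ω, -, rfl⟩ := cs.exists_isReduced w
  rw [reflectionRep_wordProd, prod_map_reflectionPerm_apply, inversionSign_wordProd]

theorem inversionSign_mul (u v t : W) :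
    cs.inversionSign (u * v) t =
      cs.inversionSign u t * cs.inversionSign v (MulAut.conj u⁻¹ t) := by
  have h : (cs.reflectionRep (u * v) (MulAut.conj (u * v)⁻¹ t, 1)).2 =
      (cs.reflectionRep u (cs.reflectionRep v (MulAut.conj (u * v)⁻¹ t, 1))).2 := by
    rw [map_mul, Equiv.Perm.mul_apply]
  simp only [reflectionRep_apply] at h
  simpa [mul_assoc] using h

theorem inversionSign_one (t : W) : cs.inversionSign 1 t = 1 := by
  classical
  simpa using cs.inversionSign_wordProd [] t

theorem inversionSign_simple_self (i : B) : cs.inversionSign (s i) (s i) = -1 := by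
  classical
  simpa using cs.inversionSign_wordProd [i] (s i)

theorem inversionSign_self {t : W} (ht : cs.IsReflection t) : cs.inversionSign t t = -1 := by
  obtain ⟨u, i, rfl⟩ := ht
  have h₁ := cs.inversionSign_mul u u⁻¹ (u * s i * u⁻¹)
  have h₂ := cs.inversionSign_mul u (s i * u⁻¹) (u * s i * u⁻¹)
  have h₃ := cs.inversionSign_mul (s i) u⁻¹ (s i)
  simp only [MulAut.conj_apply, inv_inv, inv_simple, mul_assoc, mul_inv_cancel, inv_mul_cancel,
    inv_mul_cancel_left, simple_mul_simple_cancel_left, mul_one, inversionSign_one,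
    inversionSign_simple_self, neg_mul, one_mul] at h₁ h₂ h₃
  rw [mul_assoc u, h₂, h₃, mul_neg, ← h₁]

theorem inversionSign_eq_neg_one_iff_mem {ω : List B} (hω : cs.IsReduced ω) (t : W) :
    cs.inversionSign (π ω) t = -1 ↔ t ∈ lis ω := by
  classical
  rw [inversionSign_wordProd]
  rcases Nat.le_one_iff_eq_zero_or_eq_one.mp (nodup_iff_count_le_one.mp hω.nodup_leftInvSeq t)
    with h | h
  · simp [h, ← count_eq_zero]
  · simp [h, ← count_pos_iff]

theorem inversionSign_eq_neg_one_iff {t : W} (ht : cs.IsReflection t) (w : W) :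
    cs.inversionSign w t = -1 ↔ ℓ (t * w) < ℓ w := by
  have hlt (w : W) (h : cs.inversionSign w t = -1) : ℓ (t * w) < ℓ w := by
    obtain ⟨ω, hω, rfl⟩ := cs.exists_isReduced w
    exact (cs.isLeftInversion_of_mem_leftInvSeq hω
      ((cs.inversionSign_eq_neg_one_iff_mem hω t).mp h)).2
  refine ⟨hlt w, fun h => ?_⟩
  by_contra hne
  have hsign : cs.inversionSign (t * w) t = -1 := by
    rw [inversionSign_mul, inversionSign_self cs ht, show MulAut.conj t⁻¹ t = t by simp,
      (Int.units_eq_one_or _).resolve_right hne, mul_one]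
  have := hlt (t * w) hsign
  rw [← mul_assoc, ht.mul_self, one_mul] at this
  exact lt_asymm h this

theorem inversionSign_eq_one_iff {t : W} (ht : cs.IsReflection t) (w : W) :
    cs.inversionSign w t = 1 ↔ ℓ w < ℓ (t * w) := by
  rw [← not_iff_not, ← ne_eq, Int.units_ne_iff_eq_neg, inversionSign_eq_neg_one_iff cs ht]
  have := ht.length_mul_right_ne w
  omega

theorem isLeftInversion_iff_mem_leftInvSeq {ω : List B} (hω : cs.IsReduced ω) {t : W} :
    cs.IsLeftInversion (π ω) t ↔ t ∈ lis ω :=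
  ⟨fun ⟨ht, h⟩ => (cs.inversionSign_eq_neg_one_iff_mem hω t).mp
    ((cs.inversionSign_eq_neg_one_iff ht _).mpr h), cs.isLeftInversion_of_mem_leftInvSeq hω⟩

theorem exists_wordProd_eraseIdx_eq {ω : List B} (hω : cs.IsReduced ω) {t : W}
    (h : cs.IsLeftInversion (π ω) t) : ∃ j < ω.length, π (ω.eraseIdx j) = t * π ω := by
  obtain ⟨j, hj, rfl⟩ := mem_iff_getElem.mp ((cs.isLeftInversion_iff_mem_leftInvSeq hω).mp h)
  refine ⟨j, by simpa using hj, ?_⟩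
  rw [← getD_leftInvSeq_mul_wordProd, getD_eq_getElem]

theorem exists_isReduced_sublist (ω : List B) :
    ∃ ω' : List B, ω' <+ ω ∧ cs.IsReduced ω' ∧ π ω' = π ω := by
  induction ω with
  | nil => exact ⟨[], Sublist.slnil, by simp [IsReduced], rfl⟩
  | cons i ω ih =>
    obtain ⟨β, hβω, hβ, hπ⟩ := ih
    rw [wordProd_cons, ← hπ]
    rcases cs.length_simple_mul (π β) i with hlen | hlen
    · refine ⟨i :: β, hβω.cons_cons i, ?_, wordProd_cons ..⟩
      rw [IsReduced, wordProd_cons, hlen, hβ.eq, length_cons]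
    · obtain ⟨j, hj, hπj⟩ := cs.exists_wordProd_eraseIdx_eq hβ
        ⟨cs.isReflection_simple i, by omega⟩
      refine ⟨β.eraseIdx j, ((eraseIdx_sublist β j).trans hβω).cons i, ?_, hπj⟩
      rw [IsReduced, hπj, length_eraseIdx_of_lt hj, ← hβ.eq]
      omega

end CoxeterSystem

theorem bruhatLT_reflection_mul_iff (cs : CoxeterSystem M W) {t : W} (ht : cs.IsReflection t)
    (x : W) : bruhatLT cs x (t * x) ↔ cs.length x < cs.length (t * x) := by
  refine ⟨fun ⟨⟨ω, hω, hπ, ω', hω'ω, hω', hπ'⟩, _⟩ => ?_, fun h => ⟨?_, ?_⟩⟩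
  · have hle : cs.length x ≤ cs.length (t * x) := by
      rw [← hπ, ← hπ', hω.eq, hω'.eq]
      exact hω'ω.length_le
    exact lt_of_le_of_ne hle (ht.length_mul_right_ne x).symm
  · obtain ⟨ω, hω, hπ⟩ := cs.exists_isReduced (t * x)
    obtain ⟨j, -, hπj⟩ := cs.exists_wordProd_eraseIdx_eq hω
      ⟨ht, by rwa [← hπ, ← mul_assoc, ht.mul_self, one_mul]⟩
    obtain ⟨ω', hω'j, hω', hπ'⟩ := cs.exists_isReduced_sublist (ω.eraseIdx j)
    refine ⟨ω, hω, hπ.symm, ω', hω'j.trans (ω.eraseIdx_sublist j), hω', ?_⟩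
    rw [hπ', hπj, ← hπ, ← mul_assoc, ht.mul_self, one_mul]
  · exact fun hx => h.ne (congrArg cs.length hx)

/-- if `t` is a reflection and `u < ut` in the Bruhat order, then
`uv < utv` if and only if `v < tv`. -/
theorem bruhatLT_mul_iff_of_bruhatLT_mul_reflection
    (cs : CoxeterSystem M W) {t : W} (ht : cs.IsReflection t) (u v : W)
    (h : bruhatLT cs u (u * t)) :
    bruhatLT cs (u * v) (u * t * v) ↔ bruhatLT cs v (t * v) := by
  have ht' : cs.IsReflection (u * t * u⁻¹) := ht.conj u
  rw [show u * t = u * t * u⁻¹ * u by group, bruhatLT_reflection_mul_iff cs ht',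
    ← cs.inversionSign_eq_one_iff ht'] at h
  rw [show u * t * v = u * t * u⁻¹ * (u * v) by group, bruhatLT_reflection_mul_iff cs ht',
    bruhatLT_reflection_mul_iff cs ht, ← cs.inversionSign_eq_one_iff ht',
    ← cs.inversionSign_eq_one_iff ht, cs.inversionSign_mul, h, one_mul]
  simp [mul_assoc]
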